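/- Let X, Y be subspaces of ℝ^d with X ⊆ Y and X + span(a) ⊆ Y for a unit vector a ∉ X. Let a' be the unit vector spanning (X + span(a)) ∩ X^⊥ and Ẏ = Y ∩ (a')^⊥. Then for any v ∈ ℝ^d and any monotone nondecreasing concave ρ: ℝ → ℝ with ρ(0)=0, ρ(‖Π_X v‖² + ⟨a', v⟩²) − ρ(‖Π_X v‖²) ≥ ρ(‖Π_Ẏ v‖² + ⟨a', v⟩²) − ρ(‖Π_Ẏ v‖²). -/

import Mathlib

/-!
Since `a' ∈ Xᗮ`, the subspace `X` lies in `Ẏ = Y ⊓ (ℝ ∙ a')ᗮ`, so `‖Π_X v‖² ≤ ‖Π_Ẏ v‖²`;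
the claim is then that a concave function gains less from the same increment `⟪a', v⟫²`
when it starts further to the right.
-/

open RealInnerProductSpace

section Concave

variable {𝕜 : Type*} [Field 𝕜] [LinearOrder 𝕜] [IsStrictOrderedRing 𝕜] {S : Set 𝕜} {f : 𝕜 → 𝕜}

/-- Two-point Karamata inequality: `x` and `y` are convex combinations of `p` and `q` with
swapped weights. -/
theorem ConcaveOn.add_le_add_of_add_eq (hf : ConcaveOn 𝕜 S f) {p q x y : 𝕜} (hp : p ∈ S)
    (hq : q ∈ S) (hpx : p ≤ x) (hxq : x ≤ q) (hsum : x + y = p + q) :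
    f p + f q ≤ f x + f y := by
  rcases hpx.trans hxq |>.eq_or_lt with rfl | hpq
  · obtain rfl : x = p := le_antisymm hxq hpx
    obtain rfl : y = x := by linarith
    rfl
  have hqp : 0 < q - p := sub_pos.mpr hpq
  have hl : 0 ≤ (q - x) / (q - p) := div_nonneg (sub_nonneg.mpr hxq) hqp.le
  have hm : 0 ≤ (x - p) / (q - p) := div_nonneg (sub_nonneg.mpr hpx) hqp.le
  have hsum₁ : (q - x) / (q - p) + (x - p) / (q - p) = 1 := by field_simp; ring
  have hx := hf.2 hp hq hl hm hsum₁
  have hy := hf.2 hp hq hm hl (by rw [add_comm, hsum₁])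
  simp only [smul_eq_mul] at hx hy
  obtain rfl : y = p + q - x := by linear_combination hsum
  have ex : (q - x) / (q - p) * p + (x - p) / (q - p) * q = x := by field_simp; ring
  have ey : (x - p) / (q - p) * p + (q - x) / (q - p) * q = p + q - x := by field_simp; ring
  rw [ex] at hx
  rw [ey] at hy
  linear_combination hx + hy - (f p + f q) * hsum₁

theorem ConcaveOn.map_add_sub_map_le_of_le (hf : ConcaveOn 𝕜 Set.univ f) {s t c : 𝕜}
    (hst : s ≤ t) (hc : 0 ≤ c) : f (t + c) - f t ≤ f (s + c) - f s := by
  have := hf.add_le_add_of_add_eq (Set.mem_univ s) (Set.mem_univ (t + c)) hst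
    (le_add_of_nonneg_right hc) (y := s + c) (by ring)
  linarith

end Concave

theorem Submodule.norm_orthogonalProjectionOnto_apply_le_of_le {𝕜 E : Type*} [RCLike 𝕜]
    [NormedAddCommGroup E] [InnerProductSpace 𝕜 E] {U W : Submodule 𝕜 E}
    [U.HasOrthogonalProjection] [W.HasOrthogonalProjection] (h : U ≤ W) (v : E) :
    ‖U.orthogonalProjectionOnto v‖ ≤ ‖W.orthogonalProjectionOnto v‖ := by
  rw [← orthogonalProjectionOnto_starProjection_of_le h v]
  exact U.norm_orthogonalProjectionOnto_apply_le _

theorem upward_dr_pca_general (d : ℕ)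
    (X Y : Submodule ℝ (EuclideanSpace ℝ (Fin d))) (hXY : X ≤ Y)
    (a : EuclideanSpace ℝ (Fin d))
    (a' : EuclideanSpace ℝ (Fin d))
    (ha'span : (ℝ ∙ a') = (X ⊔ (ℝ ∙ a)) ⊓ Xᗮ)
    (v : EuclideanSpace ℝ (Fin d)) (ρ : ℝ → ℝ)
    (hρconc : ConcaveOn ℝ Set.univ ρ) :
    ρ (‖Submodule.orthogonalProjectionOnto X v‖ ^ 2 + ⟪a', v⟫ ^ 2) - ρ (‖Submodule.orthogonalProjectionOnto X v‖ ^ 2) ≥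
      ρ (‖Submodule.orthogonalProjectionOnto (Y ⊓ (ℝ ∙ a')ᗮ) v‖ ^ 2 + ⟪a', v⟫ ^ 2) -
        ρ (‖Submodule.orthogonalProjectionOnto (Y ⊓ (ℝ ∙ a')ᗮ) v‖ ^ 2) := by
  have hX_le : X ≤ Y ⊓ (ℝ ∙ a')ᗮ :=
    le_inf hXY <| Submodule.le_orthogonal_iff_le_orthogonal.mpr (ha'span ▸ inf_le_right)
  have hnorm := Submodule.norm_orthogonalProjectionOnto_apply_le_of_le hX_le v
  exact hρconc.map_add_sub_map_le_of_le (by gcongr) (sq_nonneg _)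

/-- Core computation for upward DR-submodularity of the generalized PCA objective:
with `X ⊆ Y` subspaces of `ℝ^d`, `a ∉ X` a unit vector with `X + span a ⊆ Y`,
`a'` the unit vector spanning `(X + span a) ∩ X^⊥`, and `Ẏ = Y ∩ (span a')^⊥`,
for any `v` and monotone nondecreasing concave `ρ` with `ρ 0 = 0`,
`ρ(‖Π_X v‖² + ⟨a',v⟩²) − ρ(‖Π_X v‖²) ≥ ρ(‖Π_Ẏ v‖² + ⟨a',v⟩²) − ρ(‖Π_Ẏ v‖²)`. -/
theorem upward_dr_pca (d : ℕ)
    (X Y : Submodule ℝ (EuclideanSpace ℝ (Fin d))) (hXY : X ≤ Y)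
    (a : EuclideanSpace ℝ (Fin d)) (hau : ‖a‖ = 1) (haX : a ∉ X)
    (haY : X ⊔ (ℝ ∙ a) ≤ Y)
    (a' : EuclideanSpace ℝ (Fin d)) (ha'u : ‖a'‖ = 1)
    (ha'span : (ℝ ∙ a') = (X ⊔ (ℝ ∙ a)) ⊓ Xᗮ)
    (v : EuclideanSpace ℝ (Fin d)) (ρ : ℝ → ℝ)
    (hρmono : Monotone ρ) (hρconc : ConcaveOn ℝ Set.univ ρ) (hρ0 : ρ 0 = 0) :
    ρ (‖Submodule.orthogonalProjectionOnto X v‖ ^ 2 + ⟪a', v⟫ ^ 2) - ρ (‖Submodule.orthogonalProjectionOnto X v‖ ^ 2) ≥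
      ρ (‖Submodule.orthogonalProjectionOnto (Y ⊓ (ℝ ∙ a')ᗮ) v‖ ^ 2 + ⟪a', v⟫ ^ 2) -
        ρ (‖Submodule.orthogonalProjectionOnto (Y ⊓ (ℝ ∙ a')ᗮ) v‖ ^ 2) :=
  upward_dr_pca_general d X Y hXY a a' ha'span v ρ hρconc
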